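/- Let V_∞ : X → ℝ satisfy the dynamic-programming-type inequality V_∞(z₀) ≤ J_T(z₀, v(·)) + V_∞(φ(T, z₀, v(·))) for every admissible input sequence v(·) of length T, where φ(T, z₀, v(·)) is the state reached at time T. Suppose also J^cl_T(z₀) ≤ V_∞(z₀) − V_∞(z_T) + δ₁(N), and that |V_∞(w) − V_∞(z_s)| ≤ α_V(‖w − z_s‖) for all w, with α_V ∈ K∞. If every admissible v(·) in a class U steers z₀ into the ball B_κ(z_s) at time T, and ‖z_T − z_s‖ ≤ κ, then J^cl_T(z₀) ≤ inf_{v(·) ∈ U} J_T(z₀, v(·)) + δ₁(N) + 2α_V(κ). -/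
import Mathlib


/-- Core estimate for the transient performance result with terminal conditions. -/
theorem transient_performance_estimate {X U : Type*} [NormedAddCommGroup X]
    (Vinf : X → ℝ) (J : X → (ℕ → U) → ℝ) (φ : X → (ℕ → U) → X)
    (𝒰 : Set (ℕ → U)) (hne : 𝒰.Nonempty)
    (z0 zT zs : X) (Jcl δ1 κ : ℝ)
    (αV : ℝ → ℝ) (hαc : ContinuousOn αV (Set.Ici 0))
    (hαm : StrictMonoOn αV (Set.Ici 0)) (hα0 : αV 0 = 0)
    (hαu : ∀ y, ∃ x, 0 ≤ x ∧ y ≤ αV x)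
    (hdp : ∀ v ∈ 𝒰, Vinf z0 ≤ J z0 v + Vinf (φ z0 v))
    (hJcl : Jcl ≤ Vinf z0 - Vinf zT + δ1)
    (hcont : ∀ w, |Vinf w - Vinf zs| ≤ αV ‖w - zs‖)
    (hball : ∀ v ∈ 𝒰, ‖φ z0 v - zs‖ ≤ κ)
    (hzT : ‖zT - zs‖ ≤ κ) :
    Jcl ≤ sInf ((J z0) '' 𝒰) + δ1 + 2 * αV κ := by
  have hmono := hαm.monotoneOn
  have key : ∀ v ∈ 𝒰, Jcl ≤ J z0 v + δ1 + 2 * αV κ := by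
    intro v hv
    have h1 : Vinf (φ z0 v) - Vinf zs ≤ αV κ :=
      le_trans (le_trans (le_abs_self _) (hcont _))
        (hmono (norm_nonneg _) (le_trans (norm_nonneg _) (hball v hv)) (hball v hv))
    have h2 : Vinf zs - Vinf zT ≤ αV κ := by
      have ha := hcont zT
      have hb : |Vinf zT - Vinf zs| = |Vinf zs - Vinf zT| := abs_sub_comm _ _
      have hc : Vinf zs - Vinf zT ≤ |Vinf zs - Vinf zT| := le_abs_self _
      have hd : αV ‖zT - zs‖ ≤ αV κ :=
        hmono (norm_nonneg _) (le_trans (norm_nonneg _) hzT) hzT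
      linarith
    have := hdp v hv
    linarith
  have hlb : ∀ x ∈ (J z0) '' 𝒰, Jcl - δ1 - 2 * αV κ ≤ x := by
    rintro x ⟨v, hv, rfl⟩
    linarith [key v hv]
  have := le_csInf (hne.image _) hlb
  linarith
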